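/- arXiv:2006.14069 — 2 statements merged into one kernel-verified Lean document; each statement's English description precedes it below -/
import Mathlib

section
/- For a star tree on n ≥ 1 vertices, the minimum over all linear arrangements of the sum of edge lengths equals ⌊n²/4⌋, equivalently (n² - (n mod 2))/4. -/
open Finset

/-- The length of an edge under a linear arrangement `π` (positions `0,…,n-1`,
which gives the same lengths as positions `1,…,n`). -/
def edgeLen {n : ℕ} (π : Equiv.Perm (Fin n)) : Sym2 (Fin n) → ℕ :=
  Sym2.lift ⟨fun u v => ((π u : ℤ) - (π v : ℤ)).natAbs, fun u v => by dsimp only; omega⟩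

/-- The sum of edge lengths of the graph `G` under the linear arrangement `π`. -/
def D {n : ℕ} (G : SimpleGraph (Fin n)) [DecidableRel G.Adj] (π : Equiv.Perm (Fin n)) : ℕ :=
  ∑ e ∈ G.edgeFinset, edgeLen π e

/-- The maximum of `D` over all linear arrangements. -/
def Dmax {n : ℕ} (G : SimpleGraph (Fin n)) [DecidableRel G.Adj] : ℕ :=
  Finset.univ.sup (D G)

/-- The minimum of `D` over all linear arrangements. -/
def Dmin {n : ℕ} (G : SimpleGraph (Fin n)) [DecidableRel G.Adj] : ℕ :=
  Finset.univ.inf' ⟨Equiv.refl _, Finset.mem_univ _⟩ (D G)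

/-- The path graph (linear tree) on `n` vertices. -/
def pathG (n : ℕ) : SimpleGraph (Fin n) where
  Adj u v := (u : ℕ) + 1 = v ∨ (v : ℕ) + 1 = u
  symm := ⟨fun u v h => h.symm⟩
  loopless := ⟨fun u h => by omega⟩

instance (n : ℕ) : DecidableRel (pathG n).Adj :=
  fun u v => inferInstanceAs (Decidable (_ ∨ _))

/-- The star tree on `n` vertices, with hub at vertex `0`. -/
def starG (n : ℕ) : SimpleGraph (Fin n) where
  Adj u v := u ≠ v ∧ ((u : ℕ) = 0 ∨ (v : ℕ) = 0)
  symm := ⟨fun u v h => ⟨h.1.symm, h.2.symm⟩⟩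
  loopless := ⟨fun u h => h.1 rfl⟩

instance (n : ℕ) : DecidableRel (starG n).Adj :=
  fun u v => inferInstanceAs (Decidable (_ ∧ _))

/-- The bistar tree on `n` vertices with hub degrees `k1` and `n - k1`:
vertex `0` is a hub adjacent to vertex `1` and to the leaves `2,…,k1`;
vertex `1` is a hub adjacent to vertex `0` and to the leaves `k1+1,…,n-1`. -/
def bistarG (n k1 : ℕ) : SimpleGraph (Fin n) where
  Adj u v := u ≠ v ∧
    (((u : ℕ) = 0 ∧ ((v : ℕ) = 1 ∨ (2 ≤ (v : ℕ) ∧ (v : ℕ) ≤ k1))) ∨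
     ((v : ℕ) = 0 ∧ ((u : ℕ) = 1 ∨ (2 ≤ (u : ℕ) ∧ (u : ℕ) ≤ k1))) ∨
     ((u : ℕ) = 1 ∧ k1 < (v : ℕ)) ∨
     ((v : ℕ) = 1 ∧ k1 < (u : ℕ)))
  symm := ⟨fun u v h => ⟨h.1.symm, by tauto⟩⟩
  loopless := ⟨fun u h => h.1 rfl⟩

instance (n k1 : ℕ) : DecidableRel (bistarG n k1).Adj :=
  fun u v => inferInstanceAs (Decidable (_ ∧ _))

/-- The sum of the lengths of the edges incident to vertex `i` under arrangement `π`. -/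
def Dinc {n : ℕ} (G : SimpleGraph (Fin n)) [DecidableRel G.Adj] (i : Fin n)
    (π : Equiv.Perm (Fin n)) : ℕ :=
  ∑ v ∈ G.neighborFinset i, ((π i : ℤ) - (π v : ℤ)).natAbs

/-!
Every edge of a star contains the hub, so for an arrangement putting the hub at position `p`
the cost is `∑ j < n, |p - j|`, whose fourfold is `n² - 1 + (2p + 1 - n)²`. The square is
smallest, namely `1 - n % 2`, at the middle position `p = n / 2`.
-/

theorem D_eq_Dinc_of_forall_mem_edge {n : ℕ} {G : SimpleGraph (Fin n)} [DecidableRel G.Adj]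
    {i : Fin n} (hi : ∀ e ∈ G.edgeSet, i ∈ e) (π : Equiv.Perm (Fin n)) :
    D G π = Dinc G i π := by
  have hedges : G.edgeFinset = (G.neighborFinset i).image (s(i, ·)) := by
    ext e
    induction e using Sym2.ind with
    | _ u v =>
      simp only [SimpleGraph.mem_edgeFinset, SimpleGraph.mem_edgeSet, mem_image,
        SimpleGraph.mem_neighborFinset]
      constructor
      · intro h
        rcases Sym2.mem_iff.1 (hi _ h) with rfl | rfl
        · exact ⟨v, h, rfl⟩
        · exact ⟨u, h.symm, Sym2.eq_swap⟩
      · rintro ⟨w, hw, he⟩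
        rw [← SimpleGraph.mem_edgeSet, ← he]
        exact hw
  rw [D, Dinc, hedges, sum_image fun v _ w _ h => Sym2.congr_right.1 h]
  rfl

theorem starG_hub_mem_edge {n : ℕ} (hn : 0 < n) : ∀ e ∈ (starG n).edgeSet, ⟨0, hn⟩ ∈ e := by
  intro e
  induction e using Sym2.ind with
  | _ u v =>
    rintro ⟨-, hu | hv⟩
    · exact Sym2.mem_iff.2 (Or.inl (Fin.ext hu.symm))
    · exact Sym2.mem_iff.2 (Or.inr (Fin.ext hv.symm))

theorem Dinc_starG_hub {n : ℕ} (hn : 0 < n) (π : Equiv.Perm (Fin n)) :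
    Dinc (starG n) ⟨0, hn⟩ π = ∑ j ∈ range n, ((π ⟨0, hn⟩ : ℕ) - (j : ℤ)).natAbs := by
  have hnbrs : (starG n).neighborFinset ⟨0, hn⟩ = univ.erase ⟨0, hn⟩ := by
    ext v
    rw [SimpleGraph.mem_neighborFinset, mem_erase, and_iff_left (mem_univ v)]
    constructor
    · exact fun h => Ne.symm h.1
    · exact fun h => ⟨Ne.symm h, Or.inl rfl⟩
  rw [Dinc, hnbrs, sum_erase _ (by simp),
    Equiv.sum_comp π fun w : Fin n => ((π ⟨0, hn⟩ : ℕ) - ((w : ℕ) : ℤ)).natAbs]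
  exact Fin.sum_univ_eq_sum_range (fun j => ((π ⟨0, hn⟩ : ℕ) - (j : ℤ)).natAbs) n

theorem four_mul_sum_abs_sub {p n : ℕ} (hp : p ≤ n) :
    4 * ∑ j ∈ range n, |(p : ℤ) - j| = n ^ 2 - 1 + (2 * p + 1 - n) ^ 2 := by
  induction n generalizing p with
  | zero =>
    obtain rfl : p = 0 := by omega
    simp
  | succ n ih =>
    rcases hp.lt_or_eq with hp | rfl
    · rw [sum_range_succ, mul_add, ih (by omega), abs_of_nonpos (by omega)]
      push_cast
      ring
    · rw [sum_range_succ']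
      push_cast
      simp only [add_sub_add_right_eq_sub, sub_zero]
      rw [abs_of_nonneg (by positivity)]
      linear_combination ih le_rfl

theorem sq_le_four_mul_sum_natAbs_sub_add_one {p n : ℕ} (hp : p ≤ n) :
    n ^ 2 ≤ 4 * ∑ j ∈ range n, ((p : ℤ) - j).natAbs + 1 := by
  have h := four_mul_sum_abs_sub hp
  zify
  nlinarith [sq_nonneg (2 * (p : ℤ) + 1 - n)]

theorem four_mul_sum_natAbs_sub_half_add_mod_two (n : ℕ) :
    4 * ∑ j ∈ range n, (((n / 2 : ℕ) : ℤ) - j).natAbs + n % 2 = n ^ 2 := by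
  have h := four_mul_sum_abs_sub (Nat.div_le_self n 2)
  have hn := Nat.div_add_mod n 2
  have hr := Nat.mod_lt n two_pos
  generalize n / 2 = m, n % 2 = r at *
  have hodd : 2 * (m : ℤ) + 1 - n = 1 - r := by omega
  have hr2 : (r : ℤ) ^ 2 = r := by interval_cases r <;> norm_num
  rw [hodd] at h
  zify
  linear_combination h + hr2

/-- For a star tree on `n ≥ 1` vertices, the minimum over all linear
arrangements of the sum of edge lengths equals `⌊n²/4⌋ = (n² - (n mod 2))/4`. -/
theorem starG_Dmin (n : ℕ) (hn : 1 ≤ n) :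
    Dmin (starG n) = n ^ 2 / 4 ∧ n ^ 2 / 4 = (n ^ 2 - n % 2) / 4 := by
  have hD (π : Equiv.Perm (Fin n)) :
      D (starG n) π = ∑ j ∈ range n, ((π ⟨0, hn⟩ : ℕ) - (j : ℤ)).natAbs := by
    rw [D_eq_Dinc_of_forall_mem_edge (starG_hub_mem_edge hn), Dinc_starG_hub]
  have hcentre := four_mul_sum_natAbs_sub_half_add_mod_two n
  let centred : Equiv.Perm (Fin n) := Equiv.swap ⟨0, hn⟩ ⟨n / 2, by omega⟩
  have hcentred : D (starG n) centred = n ^ 2 / 4 := by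
    rw [hD, Equiv.swap_apply_left, Fin.val_mk]
    omega
  refine ⟨le_antisymm ?_ ?_, by omega⟩
  · exact hcentred ▸ inf'_le _ (mem_univ centred)
  · refine le_inf' _ _ fun π _ => ?_
    have := sq_le_four_mul_sum_natAbs_sub_add_one (π ⟨0, hn⟩).isLt.le
    rw [hD]
    omega
end

section
/- For a quasistar tree on n ≥ 4 vertices (bistar with hub degrees n-2 and 2), the minimum sum of edge lengths over all linear arrangements equals ⌊(n-1)²/4⌋ + 1, and the maximum equals (n+3)(n-2)/2. -/
open Finset

/-!
Place the degree-`(n-2)` hub at position `a`, the other hub at `b` and its leaf at `c`. The first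
hub is joined to every position except its own and `c`'s, so the total length is
`Σₚ |a - p| - |a - c| + |b - c|`, where `2 Σₚ |a - p| = a(a+1) + t(t+1)` with `t = n-1-a`.
From below, `|b - c| ≥ 1` and `|a - c| ≤ max a t` leave at least `(n-1)²/4 + 3/4`; the hub in
the middle with the other hub and its leaf at one end attains the bound. From above,
`|a - c| ≥ 1`, and `|b - c| ≤ n - 2` unless `b` and `c` are the two ends, in which case `a` is
interior and the term `2at ≥ 2(n-2)` subtracted from `(a+t)(a+t+1)` pays for the extra unit;
the hub at one end, the other hub at the other end and its leaf next to the first hub attain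
the bound.
-/

lemma two_mul_sum_range_abs_sub_self (a : ℕ) :
    2 * ∑ p ∈ range a, |(a : ℤ) - p| = a * (a + 1) := by
  induction a with
  | zero => simp
  | succ a ih =>
    rw [sum_range_succ']
    push_cast
    simp only [add_sub_add_right_eq_sub, sub_zero, mul_add, ih]
    rw [abs_of_nonneg (by positivity)]
    ring

lemma two_mul_sum_range_abs_sub {a n : ℕ} (h : a ≤ n) :
    2 * ∑ p ∈ range n, |(a : ℤ) - p| = a * (a + 1) + (n - a) * (n - a - 1) := by
  obtain ⟨t, rfl⟩ := Nat.exists_eq_add_of_le h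
  induction t with
  | zero => simp [two_mul_sum_range_abs_sub_self]
  | succ t ih =>
    rw [← add_assoc, sum_range_succ, mul_add, ih (by omega)]
    push_cast
    rw [abs_of_nonpos (by linarith)]
    ring

lemma Dmin_eq_of_le_of_eq {n k : ℕ} {G : SimpleGraph (Fin n)} [DecidableRel G.Adj]
    (hle : ∀ σ, k ≤ D G σ) (π : Equiv.Perm (Fin n)) (hπ : D G π = k) : Dmin G = k :=
  le_antisymm (hπ ▸ inf'_le _ (mem_univ π)) (le_inf' _ _ fun σ _ => hle σ)

lemma Dmax_eq_of_le_of_eq {n k : ℕ} {G : SimpleGraph (Fin n)} [DecidableRel G.Adj]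
    (hle : ∀ σ, D G σ ≤ k) (π : Equiv.Perm (Fin n)) (hπ : D G π = k) : Dmax G = k :=
  le_antisymm (Finset.sup_le fun σ _ => hle σ) (hπ ▸ le_sup (mem_univ π))

theorem Equiv.Perm.exists_apply_eq_apply_eq_apply_eq {α : Type*} [Finite α]
    {x₀ x₁ x₂ y₀ y₁ y₂ : α} (hx : Function.Injective ![x₀, x₁, x₂])
    (hy : Function.Injective ![y₀, y₁, y₂]) :
    ∃ σ : Equiv.Perm α, σ x₀ = y₀ ∧ σ x₁ = y₁ ∧ σ x₂ = y₂ := by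
  have := Equiv.Perm.isMultiplyPretransitive α (Nat.card α)
  have : MulAction.IsMultiplyPretransitive (Equiv.Perm α) α 3 :=
    MulAction.isMultiplyPretransitive_of_le (n := Nat.card α)
      (by simpa using Finite.card_le_of_embedding (⟨_, hx⟩ : Fin 3 ↪ α)) le_rfl
  obtain ⟨σ, hσ⟩ := MulAction.exists_smul_eq (Equiv.Perm α) (⟨_, hx⟩ : Fin 3 ↪ α) ⟨_, hy⟩
  exact ⟨σ, congr($hσ 0), congr($hσ 1), congr($hσ 2)⟩

def quasistarLength (n a b c : ℕ) : ℤ :=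
  ∑ p ∈ range n, |(a : ℤ) - p| - |(a : ℤ) - c| + |(b : ℤ) - c|

lemma quasistarLength_lower {n a b c : ℕ} (ha : a < n) (hc : c < n) (hbc : b ≠ c) :
    ((n : ℤ) - 1) ^ 2 < 4 * quasistarLength n a b c := by
  have hS := two_mul_sum_range_abs_sub ha.le
  have hB : 1 ≤ |(b : ℤ) - c| := Int.one_le_abs (sub_ne_zero.mpr (by exact_mod_cast hbc))
  unfold quasistarLength
  rcases le_total c a with h | h
  · have hA : |(a : ℤ) - c| ≤ a := by rw [abs_of_nonneg (by omega)]; omega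
    linarith [sq_nonneg ((2 * a : ℤ) - n)]
  · have hA : |(a : ℤ) - c| ≤ n - 1 - a := by rw [abs_of_nonpos (by omega)]; omega
    linarith [sq_nonneg ((2 * a : ℤ) - n + 2)]

lemma quasistarLength_upper {n a b c : ℕ} (ha : a < n) (hb : b < n) (hc : c < n)
    (hab : a ≠ b) (hac : a ≠ c) (hbc : b ≠ c) :
    2 * quasistarLength n a b c ≤ (n + 3) * (n - 2) := by
  have hS := two_mul_sum_range_abs_sub ha.le
  have hA : 1 ≤ |(a : ℤ) - c| := Int.one_le_abs (sub_ne_zero.mpr (by exact_mod_cast hac))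
  have hB : |(b : ℤ) - c| ≤ n - 2 ∨ 1 ≤ a ∧ a + 2 ≤ n ∧ |(b : ℤ) - c| ≤ n - 1 := by
    rcases le_total b c with h | h
    · rw [abs_of_nonpos (by omega)]; omega
    · rw [abs_of_nonneg (by omega)]; omega
  unfold quasistarLength
  rcases hB with hB | ⟨ha1, ha2, hB⟩
  · linarith [mul_nonneg (Nat.cast_nonneg (α := ℤ) a) (show (0 : ℤ) ≤ n - 1 - a by omega)]
  · linarith [mul_nonneg (show (0 : ℤ) ≤ a - 1 by omega) (show (0 : ℤ) ≤ n - 2 - a by omega)]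

lemma quasistarLength_half_one_zero (n : ℕ) :
    quasistarLength n (n / 2) 1 0 = ((n : ℤ) - 1) ^ 2 / 4 + 1 := by
  have hS := two_mul_sum_range_abs_sub (Nat.div_le_self n 2)
  unfold quasistarLength
  rcases Nat.even_or_odd' n with ⟨k, rfl | rfl⟩
  · rw [show 2 * k / 2 = k by omega] at hS ⊢
    rw [show ((2 * k : ℕ) - 1 : ℤ) ^ 2 = 1 + 4 * (k ^ 2 - k) by push_cast; ring,
      Int.add_mul_ediv_left _ _ (by norm_num)]
    push_cast at hS ⊢
    simp only [sub_zero, abs_one, Nat.abs_cast]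
    linarith
  · rw [show (2 * k + 1) / 2 = k by omega] at hS ⊢
    rw [show ((2 * k + 1 : ℕ) - 1 : ℤ) ^ 2 = 0 + 4 * k ^ 2 by push_cast; ring,
      Int.add_mul_ediv_left _ _ (by norm_num)]
    push_cast at hS ⊢
    simp only [sub_zero, abs_one, Nat.abs_cast]
    linarith

lemma two_mul_quasistarLength_zero_sub_one_one {n : ℕ} (hn : 2 ≤ n) :
    2 * quasistarLength n 0 (n - 1) 1 = (n + 3) * (n - 2) := by
  have hS := two_mul_sum_range_abs_sub (Nat.zero_le n)
  unfold quasistarLength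
  rw [abs_of_nonneg (a := ((n - 1 : ℕ) : ℤ) - (1 : ℕ)) (by omega)]
  push_cast [Nat.cast_sub (by omega : 1 ≤ n)] at hS ⊢
  simp only [zero_sub, abs_neg, abs_one, Nat.abs_cast, sub_zero, zero_add] at hS ⊢
  linarith

lemma edgeFinset_bistarG_quasistar (m : ℕ) :
    (bistarG (m + 3) (m + 1)).edgeFinset =
      insert s(1, Fin.last _) ((univ \ {0, Fin.last _}).map (Sym2.mkEmbedding 0)) := by
  ext e
  induction e with
  | _ u v =>
  rw [SimpleGraph.mem_edgeFinset, SimpleGraph.mem_edgeSet]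
  simp only [bistarG, mem_insert, mem_map, mem_sdiff, mem_univ, true_and, mem_singleton,
    Sym2.mkEmbedding_apply, Sym2.eq_iff, Fin.ext_iff, Fin.val_last, Fin.val_zero, Fin.val_one,
    ne_eq]
  have hu := u.isLt
  have hv := v.isLt
  constructor
  · rintro ⟨hne, ⟨h0, h⟩ | ⟨h0, h⟩ | ⟨h1, h⟩ | ⟨h1, h⟩⟩
    · exact .inr ⟨v, by omega, .inl ⟨h0.symm, rfl⟩⟩
    · exact .inr ⟨u, by omega, .inr ⟨h0.symm, rfl⟩⟩
    all_goals omega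
  · rintro (h | ⟨x, hx, h⟩)
    all_goals omega

lemma D_bistarG_eq_quasistarLength (m : ℕ) (π : Equiv.Perm (Fin (m + 3))) :
    (D (bistarG (m + 3) (m + 1)) π : ℤ) =
      quasistarLength (m + 3) (π 0) (π 1) (π (Fin.last _)) := by
  have h1 : s(1, Fin.last (m + 2)) ∉ (univ \ {0, Fin.last _}).map (Sym2.mkEmbedding 0) := by
    simp only [mem_map, mem_sdiff, mem_univ, true_and, mem_insert, mem_singleton,
      Sym2.mkEmbedding_apply, Sym2.eq_iff, Fin.ext_iff, Fin.val_last, Fin.val_zero, Fin.val_one]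
    omega
  rw [D, edgeFinset_bistarG_quasistar, sum_insert h1, sum_map]
  simp only [Sym2.mkEmbedding_apply, edgeLen, Sym2.lift_mk]
  push_cast
  have h0 : (0 : Fin (m + 3)) ≠ Fin.last _ := by simp [Fin.ext_iff]
  rw [sum_sdiff_eq_sub (subset_univ _), sum_pair h0,
    Equiv.sum_comp π (fun p => |((π 0 : ℕ) : ℤ) - (p : ℕ)|),
    Fin.sum_univ_eq_sum_range (fun p => |((π 0 : ℕ) : ℤ) - p|), quasistarLength]
  simp only [sub_self, abs_zero, zero_add]
  ring

lemma exists_D_bistarG_eq_quasistarLength {m a b c : ℕ} (ha : a < m + 3) (hb : b < m + 3)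
    (hc : c < m + 3) (hab : a ≠ b) (hac : a ≠ c) (hbc : b ≠ c) :
    ∃ π, (D (bistarG (m + 3) (m + 1)) π : ℤ) = quasistarLength (m + 3) a b c := by
  obtain ⟨π, h0, h1, hl⟩ := Equiv.Perm.exists_apply_eq_apply_eq_apply_eq
    (x₀ := 0) (x₁ := 1) (x₂ := Fin.last (m + 2)) (y₀ := ⟨a, ha⟩) (y₁ := ⟨b, hb⟩) (y₂ := ⟨c, hc⟩)
    (by intro i j; fin_cases i <;> fin_cases j <;> simp [Fin.ext_iff])
    (by intro i j; fin_cases i <;> fin_cases j <;> simp [Fin.ext_iff, *, eq_comm])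
  exact ⟨π, by rw [D_bistarG_eq_quasistarLength, h0, h1, hl]⟩

lemma sq_lt_four_mul_D_bistarG (m : ℕ) (π : Equiv.Perm (Fin (m + 3))) :
    (m + 2) ^ 2 < 4 * D (bistarG (m + 3) (m + 1)) π := by
  have h1 : (1 : Fin (m + 3)) ≠ Fin.last _ := by simp [Fin.ext_iff]
  have h := quasistarLength_lower (π 0).isLt (π (Fin.last _)).isLt
    (Fin.val_injective.ne (π.injective.ne h1))
  rw [← D_bistarG_eq_quasistarLength] at h
  push_cast at h
  exact_mod_cast (by linarith : ((m : ℤ) + 2) ^ 2 < 4 * D (bistarG (m + 3) (m + 1)) π)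

lemma two_mul_D_bistarG_le (m : ℕ) (π : Equiv.Perm (Fin (m + 3))) :
    2 * D (bistarG (m + 3) (m + 1)) π ≤ (m + 6) * (m + 1) := by
  have hne {i j : Fin (m + 3)} (h : i ≠ j) : (π i : ℕ) ≠ π j :=
    Fin.val_injective.ne (π.injective.ne h)
  have h := quasistarLength_upper (π 0).isLt (π 1).isLt (π (Fin.last _)).isLt
    (hne (by simp)) (hne (by simp [Fin.ext_iff])) (hne (by simp [Fin.ext_iff]))
  rw [← D_bistarG_eq_quasistarLength] at h
  push_cast at h
  exact_mod_cast (by linarith : 2 * (D (bistarG (m + 3) (m + 1)) π : ℤ) ≤ (m + 6) * (m + 1))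

lemma exists_D_bistarG_eq_sq_div_four_add_one {m : ℕ} (hm : 1 ≤ m) :
    ∃ π, D (bistarG (m + 3) (m + 1)) π = (m + 2) ^ 2 / 4 + 1 := by
  obtain ⟨π, hπ⟩ := exists_D_bistarG_eq_quasistarLength (m := m) (a := (m + 3) / 2) (b := 1)
    (c := 0) (by omega) (by omega) (by omega) (by omega) (by omega) (by omega)
  refine ⟨π, ?_⟩
  zify
  rw [hπ, quasistarLength_half_one_zero]
  push_cast
  ring_nf

lemma exists_two_mul_D_bistarG_eq (m : ℕ) :
    ∃ π, 2 * D (bistarG (m + 3) (m + 1)) π = (m + 6) * (m + 1) := by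
  obtain ⟨π, hπ⟩ := exists_D_bistarG_eq_quasistarLength (m := m) (a := 0) (b := m + 3 - 1)
    (c := 1) (by omega) (by omega) (by omega) (by omega) (by omega) (by omega)
  refine ⟨π, ?_⟩
  zify
  rw [hπ, two_mul_quasistarLength_zero_sub_one_one (by omega)]
  push_cast
  ring

/-- For a quasistar tree on `n ≥ 4` vertices (bistar with hub degrees
`n-2` and `2`), `D_min = ⌊(n-1)²/4⌋ + 1` and `D_max = (n+3)(n-2)/2`. -/
theorem quasistar_Dmin_Dmax (n : ℕ) (hn : 4 ≤ n) :
    Dmin (bistarG n (n - 2)) = (n - 1) ^ 2 / 4 + 1 ∧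
    Dmax (bistarG n (n - 2)) = (n + 3) * (n - 2) / 2 := by
  obtain ⟨m, rfl⟩ : ∃ m, n = m + 3 := ⟨n - 3, by omega⟩
  simp only [show m + 3 - 2 = m + 1 by omega, show m + 3 - 1 = m + 2 by omega,
    show m + 3 + 3 = m + 6 by omega]
  obtain ⟨π, hπ⟩ := exists_D_bistarG_eq_sq_div_four_add_one (m := m) (by omega)
  obtain ⟨τ, hτ⟩ := exists_two_mul_D_bistarG_eq m
  refine ⟨Dmin_eq_of_le_of_eq (fun σ => ?_) π hπ, Dmax_eq_of_le_of_eq (fun σ => ?_) τ (by omega)⟩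
  · have := sq_lt_four_mul_D_bistarG m σ
    omega
  · have := two_mul_D_bistarG_le m σ
    omega
end
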